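/- arXiv:2006.13145 — 3 statements merged into one kernel-verified Lean document; each statement's English description precedes it below -/
import Mathlib

section
/- Let $v_0 \in L^1_{loc}(\mathbb{R}^3)$ with $|v_0|^2$ locally integrable, and suppose $v_0$ is $\lambda$-discretely self-similar for some $\lambda > 1$, i.e., $v_0(x) = \lambda v_0(\lambda x)$ for a.e. $x$. If $\|v_0\|_{L^2_{uloc}} := \sup_{x\in\mathbb{R}^3}\|v_0\|_{L^2(B_1(x))} < \infty$, then $\sup_{x_0 \in \mathbb{R}^3,\, r>0} \frac{1}{r}\int_{B_r(x_0)}|v_0|^2\,dx \le \lambda\,\|v_0\|_{L^2_{uloc}}^2$. -/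
open MeasureTheory Metric

abbrev E3 := EuclideanSpace ℝ (Fin 3)

/-!
If `v₀(x) = λ v₀(λx)`, the change of variables `y = λx` gives
`∫_{B(λx, λr)} |v₀|² = λ ∫_{B(x,r)} |v₀|²` in dimension three, hence
`∫_{B(λᵏx, λᵏr)} |v₀|² = λᵏ ∫_{B(x,r)} |v₀|²` for every `k ∈ ℤ`. Given a ball `B(x₀, r)`, choose
`k` with `r ≤ λᵏ ≤ λr`: it is the image of a ball of radius `λ⁻ᵏr ≤ 1`, so
`∫_{B(x₀,r)} |v₀|² ≤ λᵏ ‖v₀‖²_{L²_uloc} ≤ λ r ‖v₀‖²_{L²_uloc}`.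
-/

theorem setIntegral_ball_smul_of_ae_eq_mul_comp_smul {E : Type*} [NormedAddCommGroup E]
    [NormedSpace ℝ E] [MeasurableSpace E] [BorelSpace E] [FiniteDimensional ℝ E]
    (μ : Measure E) [μ.IsAddHaarMeasure] {g : E → ℝ} {l c : ℝ} (hl : 0 < l) (hc : c ≠ 0)
    (hg : ∀ᵐ x ∂μ, g x = c * g (l • x)) (x : E) (r : ℝ) :
    ∫ y in ball (l • x) (l * r), g y ∂μ = l ^ Module.finrank ℝ E / c * ∫ y in ball x r, g y ∂μ := by
  have h_ae : ∫ y in ball x r, g y ∂μ = c * ∫ y in ball x r, g (l • y) ∂μ := by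
    rw [← integral_const_mul]
    exact setIntegral_congr_ae measurableSet_ball (hg.mono fun y hy _ => hy)
  have h_change : ∫ y in ball x r, g (l • y) ∂μ
      = (l ^ Module.finrank ℝ E)⁻¹ * ∫ y in ball (l • x) (l * r), g y ∂μ := by
    rw [Measure.setIntegral_comp_smul_of_pos μ g _ hl, _root_.smul_ball hl.ne', Real.norm_of_nonneg
      hl.le, smul_eq_mul]
  rw [h_ae, h_change]
  field_simp

theorem eq_zpow_mul_of_smul_mul_eq_mul {E : Type*} [AddCommGroup E] [Module ℝ E]
    {F : E → ℝ → ℝ} {l s : ℝ} (hl : l ≠ 0) (hs : s ≠ 0)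
    (hF : ∀ x r, F (l • x) (l * r) = s * F x r) (k : ℤ) (x : E) (r : ℝ) :
    F (l ^ k • x) (l ^ k * r) = s ^ k * F x r := by
  have hstep : ∀ k : ℤ, F (l ^ (k + 1) • x) (l ^ (k + 1) * r) = s * F (l ^ k • x) (l ^ k * r) := by
    intro k
    rw [zpow_add_one₀ hl, mul_comm _ l, mul_smul, mul_assoc, hF]
  induction k using Int.induction_on with
  | zero => simp
  | succ k ih => rw [hstep, ih, zpow_add_one₀ hs, mul_comm _ s, mul_assoc]
  | pred k ih =>
    have h := hstep (-k - 1)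
    rw [sub_add_cancel, ih] at h
    apply mul_left_cancel₀ hs
    rw [← h, zpow_sub_one₀ hs]
    field_simp

theorem dss_morrey_bound (v₀ : E3 → E3) (l : ℝ) (hl : 1 < l)
    (hloc : ∀ (x : E3) (r : ℝ), IntegrableOn (fun y => ‖v₀ y‖^2) (ball x r))
    (hdss : ∀ᵐ x : E3, v₀ x = l • v₀ (l • x))
    (M : ℝ) (hM : ∀ x : E3, ∫ y in ball x 1, ‖v₀ y‖^2 ≤ M) :
    ∀ (x₀ : E3) (r : ℝ), 0 < r →
      (1/r) * ∫ y in ball x₀ r, ‖v₀ y‖^2 ≤ l * M := by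
  intro x₀ r hr
  have hl0 : 0 < l := one_pos.trans hl
  set F : E3 → ℝ → ℝ := fun x ρ => ∫ y in ball x ρ, ‖v₀ y‖ ^ 2
  have hscale : ∀ x ρ, F (l • x) (l * ρ) = l * F x ρ := by
    intro x ρ
    have hsq : ∀ᵐ y : E3, ‖v₀ y‖ ^ 2 = l ^ 2 * ‖v₀ (l • y)‖ ^ 2 := hdss.mono fun y hy => by
      rw [hy, norm_smul, Real.norm_of_nonneg hl0.le, mul_pow]
    simp only [F, setIntegral_ball_smul_of_ae_eq_mul_comp_smul volume hl0 (by positivity) hsq,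
      finrank_euclideanSpace_fin]
    field_simp
  obtain ⟨n, hn_lt, hn_le⟩ := exists_mem_Ioc_zpow hr hl
  have hlk : 0 < l ^ (n + 1) := zpow_pos hl0 _
  set x := (l ^ (n + 1))⁻¹ • x₀
  set ρ := (l ^ (n + 1))⁻¹ * r
  have hF : F x₀ r = l ^ (n + 1) * F x ρ := by
    simpa only [x, ρ, smul_inv_smul₀ hlk.ne', mul_inv_cancel_left₀ hlk.ne']
      using eq_zpow_mul_of_smul_mul_eq_mul hl0.ne' hl0.ne' hscale (n + 1) x ρ
  have hρ : ρ ≤ 1 := by rwa [inv_mul_le_iff₀ hlk, mul_one]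
  have hFM : F x ρ ≤ M := (setIntegral_mono_set (hloc x 1) (.of_forall fun _ => by positivity)
    (ball_subset_ball hρ).eventuallyLE).trans (hM x)
  have hM0 : 0 ≤ M := (setIntegral_nonneg measurableSet_ball fun _ _ => by positivity).trans (hM 0)
  have hpow : l ^ (n + 1) ≤ l * r := by
    rw [zpow_add_one₀ hl0.ne', mul_comm]; gcongr
  calc 1 / r * F x₀ r = 1 / r * (l ^ (n + 1) * F x ρ) := by rw [hF]
    _ ≤ 1 / r * (l * r * M) := by gcongr
    _ = l * M := by field_simp
end

section
/- Let $v_0$ be $\lambda$-discretely self-similar ($v_0(x)=\lambda v_0(\lambda x)$ a.e.) with $\lambda>1$, and suppose there exists $R_*>0$ and $\epsilon>0$ such that $\int_{B_1(x)}|v_0|^2 \le \epsilon/\lambda$ whenever $|x|\ge R_*$. Then with $\mu = 1/(\lambda R_*)$, for every $x_0 \ne 0$ and every $r \in (0, \mu|x_0|]$ one has $\frac{1}{r}\int_{B_r(x_0)}|v_0|^2\,dx \le \epsilon$. -/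
/-!
Discrete self-similarity makes the scaled energy `(1/r) ∫_{B_r(x)} |v₀|²` invariant under the
dilations `(x, r) ↦ (λⁿ x, λⁿ r)`, `n ∈ ℤ`: in three dimensions the Jacobian `λ³` of the dilation
and the factor `λ²` from `|v₀|²` leave exactly one power of `λ`, which the radius absorbs. Choose
`n` with `λⁿ r ∈ (1/λ, 1]`. Then `(1/r) ∫_{B_r(x₀)} |v₀|² ≤ λ ∫_{B_1(λⁿ x₀)} |v₀|²`, and the bound
`r ≤ |x₀| / (λ R_*)` puts `λⁿ x₀` outside the ball of radius `R_*`, where the hypothesis gives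
`∫_{B_1} |v₀|² ≤ ε/λ`.
-/

open MeasureTheory Metric

open Module Pointwise

lemma exists_zpow_mul_mem_Ioc {l r : ℝ} (hl : 1 < l) (hr : 0 < r) :
    ∃ n : ℤ, l ^ n * r ∈ Set.Ioc l⁻¹ 1 := by
  have hl0 : 0 < l := one_pos.trans hl
  obtain ⟨n, hn_le, hn_lt⟩ := exists_mem_Ico_zpow (one_div_pos.2 hr) hl
  refine ⟨n, ?_, (le_div_iff₀ hr).1 hn_le⟩
  rw [zpow_add_one₀ hl0.ne', div_lt_iff₀ hr, mul_right_comm] at hn_lt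
  exact (inv_lt_iff_one_lt_mul₀ hl0).2 hn_lt

lemma apply_zpow_smul_of_apply_smul {M : Type*} [AddCommGroup M] [Module ℝ M] {l : ℝ}
    (hl : l ≠ 0) {F : M → ℝ} (hF : ∀ p, F (l • p) = l * F p) (n : ℤ) (p : M) :
    F (l ^ n • p) = l ^ n * F p := by
  have hnat : ∀ (k : ℕ) (q : M), F (l ^ k • q) = l ^ k * F q := by
    intro k
    induction k with
    | zero => simp
    | succ k ih => intro q; rw [pow_succ', mul_smul, hF, ih, mul_assoc]
  cases n with
  | ofNat k => simpa using hnat k p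
  | negSucc k =>
    have hp := hnat (k + 1) (l ^ Int.negSucc k • p)
    rw [smul_smul, zpow_negSucc, mul_inv_cancel₀ (pow_ne_zero _ hl), one_smul] at hp
    rw [zpow_negSucc, hp, inv_mul_cancel_left₀ (pow_ne_zero _ hl)]

def DiscretelySelfSimilar {E F : Type*} [MeasurableSpace E] [SMul ℝ E] [SMul ℝ F]
    (μ : Measure E) (l : ℝ) (v : E → F) : Prop :=
  ∀ᵐ x ∂μ, v x = l • v (l • x)

namespace DiscretelySelfSimilar

variable {E F : Type*} [NormedAddCommGroup E] [NormedSpace ℝ E] [MeasurableSpace E]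
  [BorelSpace E] [FiniteDimensional ℝ E] {μ : Measure E} [μ.IsAddHaarMeasure]
  [NormedAddCommGroup F] [NormedSpace ℝ F] {l : ℝ} {v : E → F}

theorem pow_finrank_mul_setIntegral_ball (hv : DiscretelySelfSimilar μ l v) (hl : 0 < l)
    (y : E) (s : ℝ) :
    l ^ finrank ℝ E * ∫ x in ball y s, ‖v x‖ ^ 2 ∂μ
      = l ^ 2 * ∫ x in ball (l • y) (l * s), ‖v x‖ ^ 2 ∂μ := by
  have h_pointwise : ∫ x in ball y s, ‖v x‖ ^ 2 ∂μ
      = ∫ x in ball y s, l ^ 2 * ‖v (l • x)‖ ^ 2 ∂μ := by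
    refine setIntegral_congr_ae measurableSet_ball ?_
    filter_upwards [hv] with x hx _
    rw [hx, norm_smul, mul_pow, Real.norm_eq_abs, sq_abs]
  have h_ball : l • ball y s = ball (l • y) (l * s) := by
    rw [_root_.smul_ball hl.ne', Real.norm_eq_abs, abs_of_pos hl]
  rw [h_pointwise, integral_const_mul,
    Measure.setIntegral_comp_smul_of_pos μ (fun x ↦ ‖v x‖ ^ 2) _ hl, h_ball, smul_eq_mul]
  field_simp

theorem setIntegral_ball_zpow_smul (hv : DiscretelySelfSimilar μ l v) (hl : 0 < l)
    (hE : finrank ℝ E = 3) (n : ℤ) (y : E) (s : ℝ) :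
    ∫ x in ball (l ^ n • y) (l ^ n * s), ‖v x‖ ^ 2 ∂μ
      = l ^ n * ∫ x in ball y s, ‖v x‖ ^ 2 ∂μ := by
  refine apply_zpow_smul_of_apply_smul (M := E × ℝ)
    (F := fun p ↦ ∫ x in ball p.1 p.2, ‖v x‖ ^ 2 ∂μ) hl.ne' (fun p ↦ ?_) n (y, s)
  have h := hv.pow_finrank_mul_setIntegral_ball hl p.1 p.2
  rw [hE] at h
  simp only [Prod.smul_fst, Prod.smul_snd, smul_eq_mul]
  apply mul_left_cancel₀ (pow_ne_zero 2 hl.ne')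
  rw [← h]
  ring

end DiscretelySelfSimilar

theorem dss_small_scaled_energy_general (v₀ : E3 → E3) (l Rstar ε : ℝ)
    (hl : 1 < l) (hR : 0 < Rstar)
    (hloc : ∀ (x : E3) (r : ℝ), IntegrableOn (fun y => ‖v₀ y‖^2) (ball x r))
    (hdss : ∀ᵐ x : E3, v₀ x = l • v₀ (l • x))
    (hsmall : ∀ x : E3, Rstar ≤ ‖x‖ → ∫ y in ball x 1, ‖v₀ y‖^2 ≤ ε / l) :
    ∀ x₀ : E3, x₀ ≠ 0 → ∀ r : ℝ, 0 < r → r ≤ (1/(l * Rstar)) * ‖x₀‖ →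
      (1/r) * ∫ y in ball x₀ r, ‖v₀ y‖^2 ≤ ε := by
  intro x₀ _ r hr hr_le
  have hl0 : 0 < l := one_pos.trans hl
  obtain ⟨n, hR_gt, hR_le⟩ := exists_zpow_mul_mem_Ioc hl hr
  set c := l ^ n
  have hc : 0 < c := zpow_pos hl0 n
  have hR_gt' : 1 < l * (c * r) := (inv_lt_iff_one_lt_mul₀' hl0).1 hR_gt
  have hx₀ : r * (l * Rstar) ≤ ‖x₀‖ := by
    rwa [one_div_mul_eq_div, le_div_iff₀ (by positivity)] at hr_le
  have h_far : Rstar ≤ ‖c • x₀‖ := by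
    rw [norm_smul, Real.norm_of_nonneg hc.le]
    nlinarith
  have h_scale : ∫ y in ball (c • x₀) (c * r), ‖v₀ y‖ ^ 2 = c * ∫ y in ball x₀ r, ‖v₀ y‖ ^ 2 :=
    DiscretelySelfSimilar.setIntegral_ball_zpow_smul hdss hl0 finrank_euclideanSpace_fin n x₀ r
  have h_nonneg : 0 ≤ ∫ y in ball (c • x₀) (c * r), ‖v₀ y‖ ^ 2 :=
    setIntegral_nonneg measurableSet_ball fun _ _ ↦ by positivity
  calc (1 / r) * ∫ y in ball x₀ r, ‖v₀ y‖ ^ 2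
      = (c * r)⁻¹ * ∫ y in ball (c • x₀) (c * r), ‖v₀ y‖ ^ 2 := by
        rw [h_scale]; field_simp
    _ ≤ l * ∫ y in ball (c • x₀) 1, ‖v₀ y‖ ^ 2 := by
        refine mul_le_mul ((inv_lt_iff_one_lt_mul₀ (by positivity)).2 hR_gt').le ?_ h_nonneg hl0.le
        exact setIntegral_mono_set (hloc _ 1) (.of_forall fun _ ↦ by positivity)
          (.of_forall (ball_subset_ball hR_le))
    _ ≤ l * (ε / l) := by gcongr; exact hsmall _ h_far
    _ = ε := by field_simp

theorem dss_small_scaled_energy (v₀ : E3 → E3) (l Rstar ε : ℝ)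
    (hl : 1 < l) (hR : 0 < Rstar) (hε : 0 < ε)
    (hloc : ∀ (x : E3) (r : ℝ), IntegrableOn (fun y => ‖v₀ y‖^2) (ball x r))
    (hdss : ∀ᵐ x : E3, v₀ x = l • v₀ (l • x))
    (hsmall : ∀ x : E3, Rstar ≤ ‖x‖ → ∫ y in ball x 1, ‖v₀ y‖^2 ≤ ε / l) :
    ∀ x₀ : E3, x₀ ≠ 0 → ∀ r : ℝ, 0 < r → r ≤ (1/(l * Rstar)) * ‖x₀‖ →
      (1/r) * ∫ y in ball x₀ r, ‖v₀ y‖^2 ≤ ε :=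
  dss_small_scaled_energy_general v₀ l Rstar ε hl hR hloc hdss hsmall
end

section
/- Let $\lambda > 1$, $K > 0$, and define $f(x) = K|x - \lambda^{1/2}e_1|^{-1}\chi_{B_\lambda \setminus B_1}(x)$ on $\mathbb{R}^3$, and $F(x) = \sum_{k\in\mathbb{Z}} \lambda^k f(\lambda^k x)$. Then for any $\mu \in (0, 1-\lambda^{-1/2})$, $\sup_{x\in\mathbb{R}^3,\, r\in(0,\mu|x|]} \frac{1}{r}\int_{B_r(x)}|F|^2\,dx \ge \frac{1}{\mu\lambda^{1/2}}\int_{B_{\mu\lambda^{1/2}}(\lambda^{1/2}e_1)}|F|^2\,dx = 4\pi K^2$, hence if $K^2 > \epsilon/(4\pi)$ the supremum exceeds $\epsilon$. -/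
open MeasureTheory Metric

noncomputable def e1 : E3 := EuclideanSpace.single 0 1

noncomputable def dssExample (l K : ℝ) : E3 → ℝ := fun x =>
  ∑' k : ℤ, l ^ k *
    Set.indicator (ball (0:E3) l \ ball 0 1)
      (fun y => K * ‖y - Real.sqrt l • e1‖⁻¹) ((l ^ k : ℝ) • x)

lemma vol_unit_ball : (volume (ball (0:E3) 1)).toReal = 4/3 * Real.pi := by
  rw [EuclideanSpace.volume_ball]
  have h32 : ((Fintype.card (Fin 3) : ℝ) / 2 + 1) = (3/2 + 1 : ℝ) := by norm_num
  have hG : Real.Gamma ((Fintype.card (Fin 3) : ℝ) / 2 + 1) = 3/4 * Real.sqrt Real.pi := by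
    rw [h32, Real.Gamma_add_one (by norm_num)]
    have : (3/2 : ℝ) = 1/2 + 1 := by norm_num
    rw [this, Real.Gamma_add_one (by norm_num), Real.Gamma_one_half_eq]
    ring
  rw [hG]
  have hsp : Real.sqrt Real.pi ^ Fintype.card (Fin 3) = Real.pi * Real.sqrt Real.pi := by
    have : Fintype.card (Fin 3) = 3 := by simp
    rw [this]
    have := Real.sq_sqrt Real.pi_pos.le
    nlinarith [Real.sqrt_nonneg Real.pi]
  rw [hsp]
  have hs0 : (0:ℝ) < Real.sqrt Real.pi := Real.sqrt_pos.2 Real.pi_pos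
  rw [ENNReal.ofReal_one, one_pow, one_mul, ENNReal.toReal_ofReal (by positivity)]
  field_simp

lemma ball_integral (K ρ : ℝ) (hρ : 0 < ρ) (c : E3) :
    ∫ y in ball c ρ, (K * ‖y - c‖⁻¹)^2 = 4 * Real.pi * K^2 * ρ := by
  set g : ℝ → ℝ := Set.indicator (Set.Iio ρ) (fun t => (K * t⁻¹)^2) with hg
  have h1 : ∫ y in ball c ρ, (K * ‖y - c‖⁻¹)^2 = ∫ y : E3, g ‖y - c‖ := by
    rw [← integral_indicator measurableSet_ball]
    refine integral_congr_ae (Filter.Eventually.of_forall fun y => ?_)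
    rw [hg]
    simp only [Set.indicator_apply, mem_ball, dist_eq_norm, Set.mem_Iio]
    rfl
  have h2 : ∫ y : E3, g ‖y - c‖ = ∫ y : E3, g ‖y‖ :=
    integral_sub_right_eq_self (fun y => g ‖y‖) c
  have h3 : ∫ y : E3, g ‖y‖ =
      (Module.finrank ℝ E3) • (volume (ball (0:E3) 1)).toReal •
        ∫ t in Set.Ioi (0:ℝ), t ^ (Module.finrank ℝ E3 - 1) • g t :=
    integral_fun_norm_addHaar volume g
  have hfr : Module.finrank ℝ E3 = 3 := finrank_euclideanSpace_fin
  have h4 : ∫ t in Set.Ioi (0:ℝ), t ^ (3 - 1 : ℕ) • g t = K^2 * ρ := by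
    have : ∀ t : ℝ, t ^ (2:ℕ) • g t = Set.indicator (Set.Iio ρ) (fun t => t^2 * (K * t⁻¹)^2) t := by
      intro t
      by_cases ht : t ∈ Set.Iio ρ
      · rw [hg, Set.indicator_of_mem ht, Set.indicator_of_mem ht]; simp [smul_eq_mul]
      · rw [hg, Set.indicator_of_notMem ht, Set.indicator_of_notMem ht, smul_zero]
    simp only [show (3-1 : ℕ) = 2 from rfl, this]
    rw [setIntegral_indicator measurableSet_Iio]
    have hIo : Set.Ioi (0:ℝ) ∩ Set.Iio ρ = Set.Ioo 0 ρ := by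
      ext t; simp [Set.mem_Ioo, and_comm]
    rw [hIo]
    rw [setIntegral_congr_fun measurableSet_Ioo (g := fun _ => K^2)
      (fun t ht => by
        have ht0 : t ≠ 0 := ne_of_gt ht.1
        field_simp)]
    rw [setIntegral_const, measureReal_def, Real.volume_Ioo, sub_zero, ENNReal.toReal_ofReal hρ.le, smul_eq_mul]
    ring
  rw [h1, h2, h3, hfr, vol_unit_ball, h4, nsmul_eq_mul, smul_eq_mul]
  push_cast
  ring

lemma dss_pointwise (l K ρ : ℝ) (hl : 1 < l) (hρ0 : 0 < ρ)
    (hρ : ρ < Real.sqrt l - 1) (y : E3) (hy : y ∈ ball (Real.sqrt l • e1) ρ) :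
    dssExample l K y = K * ‖y - Real.sqrt l • e1‖⁻¹ := by
  set s := Real.sqrt l with hs
  have hl0 : (0:ℝ) < l := lt_trans one_pos hl
  have hs2 : s^2 = l := Real.sq_sqrt hl0.le
  have hs1 : 1 < s := by
    rw [hs]
    exact (Real.lt_sqrt (by norm_num)).2 (by simpa using hl)
  have hne1 : ‖e1‖ = 1 := by
    rw [e1, EuclideanSpace.norm_single]; norm_num
  have hnc : ‖s • e1‖ = s := by
    rw [norm_smul, hne1, mul_one, Real.norm_eq_abs, abs_of_pos (lt_trans one_pos hs1)]
  rw [mem_ball, dist_eq_norm] at hy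
  -- bounds on ‖y‖
  have hyub : ‖y‖ < l := by
    calc ‖y‖ = ‖(y - s • e1) + s • e1‖ := by rw [sub_add_cancel]
    _ ≤ ‖y - s • e1‖ + ‖s • e1‖ := norm_add_le _ _
    _ < ρ + s := by rw [hnc]; linarith
    _ < (s - 1) + s := by linarith
    _ ≤ l := by nlinarith
  have hylb : 1 < ‖y‖ := by
    have := norm_sub_norm_le (s • e1) y
    rw [hnc] at this
    have h2 : ‖s • e1 - y‖ = ‖y - s • e1‖ := norm_sub_rev _ _
    linarith [hy, (by linarith : s - ρ > 1), this, h2.le.trans_lt hy]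
  have hy0 : (0:ℝ) < ‖y‖ := lt_trans one_pos hylb
  rw [dssExample]
  rw [tsum_eq_single 0 ?_]
  · simp only [zpow_zero, one_smul, one_mul]
    rw [Set.indicator_of_mem]
    constructor
    · rw [mem_ball, dist_eq_norm, sub_zero]; exact hyub
    · rw [mem_ball, dist_eq_norm, sub_zero]; push_neg; exact hylb.le
  · intro k hk
    have hlk : (0:ℝ) < l ^ k := zpow_pos hl0 k
    have hnorm : ‖(l ^ k : ℝ) • y‖ = l ^ k * ‖y‖ := by
      rw [norm_smul, Real.norm_eq_abs, abs_of_pos hlk]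
    rw [Set.indicator_of_notMem, mul_zero]
    rcases lt_or_gt_of_ne hk with hk1 | hk1
    · -- k ≤ -1 : inside ball 0 1
      intro hmem
      apply hmem.2
      rw [mem_ball, dist_eq_norm, sub_zero, hnorm]
      have hle : l ^ k ≤ l⁻¹ := by
        rw [← zpow_neg_one]
        exact zpow_le_zpow_right₀ hl.le (by omega)
      calc l ^ k * ‖y‖ ≤ l⁻¹ * ‖y‖ := by nlinarith
      _ < l⁻¹ * l := by
          apply mul_lt_mul_of_pos_left hyub (by positivity)
      _ = 1 := inv_mul_cancel₀ (ne_of_gt hl0)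
    · -- k ≥ 1 : outside ball 0 l
      intro hmem
      have := hmem.1
      rw [mem_ball, dist_eq_norm, sub_zero, hnorm] at this
      have hge : l ≤ l ^ k := by
        calc l = l ^ (1:ℤ) := (zpow_one l).symm
        _ ≤ l ^ k := zpow_le_zpow_right₀ hl.le (by omega)
      nlinarith

theorem dss_example_no_small_scaled_energy (l K ε : ℝ) (hl : 1 < l) (hK : 0 < K) :
    ∀ μ : ℝ, μ ∈ Set.Ioo (0:ℝ) (1 - (Real.sqrt l)⁻¹) →
      ((1 / (μ * Real.sqrt l)) *
          ∫ y in ball (Real.sqrt l • e1) (μ * Real.sqrt l), (dssExample l K y)^2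
        = 4 * Real.pi * K^2)
      ∧ (ε / (4 * Real.pi) < K^2 →
          ∃ (x : E3) (r : ℝ), 0 < r ∧ r ≤ μ * ‖x‖ ∧
            ε < (1/r) * ∫ y in ball x r, (dssExample l K y)^2) := by
  intro μ hμ
  obtain ⟨hμ0, hμ1⟩ := hμ
  have hl0 : (0:ℝ) < l := lt_trans one_pos hl
  set s := Real.sqrt l with hs
  have hs1 : 1 < s := (Real.lt_sqrt (by norm_num)).2 (by simpa using hl)
  have hs0 : (0:ℝ) < s := lt_trans one_pos hs1
  set ρ := μ * s with hρdef
  have hρ0 : 0 < ρ := mul_pos hμ0 hs0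
  have hρub : ρ < s - 1 := by
    have := mul_lt_mul_of_pos_right hμ1 hs0
    have h2 : (1 - s⁻¹) * s = s - 1 := by field_simp
    rw [h2] at this
    exact this
  have hint : ∫ y in ball (s • e1) ρ, (dssExample l K y)^2
      = 4 * Real.pi * K^2 * ρ := by
    rw [setIntegral_congr_fun measurableSet_ball
      (g := fun y => (K * ‖y - s • e1‖⁻¹)^2)
      (fun y hy => by rw [dss_pointwise l K ρ hl hρ0 hρub y hy])]
    exact ball_integral K ρ hρ0 (s • e1)
  have hpart1 : (1 / ρ) * ∫ y in ball (s • e1) ρ, (dssExample l K y)^2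
      = 4 * Real.pi * K^2 := by
    rw [hint]
    field_simp
  refine ⟨hpart1, fun hε => ?_⟩
  have hnc : ‖s • e1‖ = s := by
    rw [norm_smul, Real.norm_eq_abs, abs_of_pos hs0, e1,
      EuclideanSpace.norm_single]
    norm_num
  refine ⟨s • e1, ρ, hρ0, by rw [hnc], ?_⟩
  rw [hpart1]
  have h4π : (0:ℝ) < 4 * Real.pi := by positivity
  have := (div_lt_iff₀ h4π).1 hε
  linarith
end
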